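/- Under Assumption 1 with κ > 0 and ε ≤ κ(1−β)/(9(r+1)), for p = diag(X_opt) of an optimal solution of P(A,r) (after removing duplicate columns so β < 1), the basis indices I satisfy p(i) > r/(r+1) for all i ∈ I, and consequently p(i) ≤ r/(r+1) for all i ∉ I; hence the r largest entries of p are exactly the basis indices. -/

import Mathlib

noncomputable section
open Matrix
open scoped Classical

/-- Entrywise L1 norm of a vector. -/
def l1 {α : Type*} [Fintype α] (v : α → ℝ) : ℝ := ∑ i, |v i|

/-- Induced L1 norm of a matrix (maximum column sum of absolute values). -/
def ml1 {α β : Type*} [Fintype α] [Fintype β] (M : Matrix α β ℝ) : ℝ :=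
  sSup (Set.range fun j => ∑ i, |M i j|)

/-- Feasible set of problem P(A,r). -/
def Feas {ι : Type*} [Fintype ι] [DecidableEq ι] (X : Matrix ι ι ℝ) (r : ℕ) : Prop :=
  Matrix.trace X = (r : ℝ) ∧ (∀ i, X i i ≤ 1) ∧ (∀ i j, 0 ≤ X i j) ∧
    (∀ i j, X i j ≤ X i i)

/-- κ(W) = min over j of min over nonnegative z (supported off j) of
    ‖w_j − W(:,R∖{j}) z‖₁. -/
def kappa {d r : ℕ} (W : Matrix (Fin d) (Fin r) ℝ) : ℝ :=
  sInf {c | ∃ (j : Fin r) (z : Fin r → ℝ), (∀ k, 0 ≤ z k) ∧ z j = 0 ∧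
    c = l1 (fun i => W i j - ∑ k, W i k * z k)}

/-- ω(W) = min over distinct pairs of ‖w_{j₁} − w_{j₂}‖₁. -/
def omegaW {d r : ℕ} (W : Matrix (Fin d) (Fin r) ℝ) : ℝ :=
  sInf {c | ∃ j₁ j₂ : Fin r, j₁ ≠ j₂ ∧ c = l1 (fun i => W i j₁ - W i j₂)}

/-- β = maximum entry of H̄. -/
def betaH {r m : ℕ} (Hb : Matrix (Fin r) (Fin m) ℝ) : ℝ :=
  sSup (Set.range fun p : Fin r × Fin m => Hb p.1 p.2)

/-!
The ideal matrix `X₀`, which copies the rows of `H` to the basis indices, is feasible and its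
residual `A - A X₀ = N - N X₀` has norm at most `2ε`; hence so does the optimal residual. Fix a
basis index `j` with diagonal entry `p`, let `x` be the corresponding column of `X_opt` and
`y = H x`. The residual bound gives `δ := ‖w_j - W y‖₁ ≤ (3 + ‖x‖₁) ε`, and `‖x‖₁ ≤ 1 + δ`
because the columns of `W` sum to one. Rescaling `y` off its `j`-th entry, the definition of `κ`
gives `κ (1 - y_j) ≤ δ`, while `y_j ≤ p + β (‖x‖₁ - p)` because `H` is the identity on the basis
columns. Hence `κ (1 - β) (1 - p) ≤ 2δ = O(ε)`, and the bound on `ε` forces `p > r/(r+1)`. Since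
the trace is `r`, every other diagonal entry is then at most `r/(r+1)`.
-/

section L1

variable {α β : Type*} [Fintype α] [Fintype β]

lemma l1_nonneg (v : α → ℝ) : 0 ≤ l1 v :=
  Finset.sum_nonneg fun _ _ => abs_nonneg _

lemma l1_add_le (u v : α → ℝ) : l1 (u + v) ≤ l1 u + l1 v := by
  unfold l1
  rw [← Finset.sum_add_distrib]
  exact Finset.sum_le_sum fun i _ => abs_add_le _ _

lemma l1_sub_le (u v : α → ℝ) : l1 (u - v) ≤ l1 u + l1 v := by
  unfold l1
  rw [← Finset.sum_add_distrib]
  exact Finset.sum_le_sum fun i _ => abs_sub _ _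

lemma l1_eq_sum_of_nonneg {v : α → ℝ} (hv : ∀ i, 0 ≤ v i) : l1 v = ∑ i, v i :=
  Finset.sum_congr rfl fun i _ => abs_of_nonneg (hv i)

lemma l1_col_le_ml1 (M : Matrix α β ℝ) (j : β) : l1 (fun i => M i j) ≤ ml1 M :=
  le_csSup (Set.finite_range _).bddAbove ⟨j, rfl⟩

lemma ml1_le_of_l1_col_le {M : Matrix α β ℝ} {c : ℝ} (hc : 0 ≤ c)
    (h : ∀ j, l1 (fun i => M i j) ≤ c) : ml1 M ≤ c :=
  Real.sSup_le (by rintro _ ⟨j, rfl⟩; exact h j) hc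

lemma l1_mulVec_le {M : Matrix α β ℝ} {c : ℝ} (hM : ∀ j, l1 (fun i => M i j) ≤ c)
    {x : β → ℝ} (hx : ∀ j, 0 ≤ x j) : l1 (M *ᵥ x) ≤ c * ∑ j, x j :=
  calc l1 (M *ᵥ x) ≤ ∑ i, ∑ j, |M i j| * x j := Finset.sum_le_sum fun i _ =>
        (Finset.abs_sum_le_sum_abs _ _).trans_eq
          (Finset.sum_congr rfl fun j _ => by rw [abs_mul, abs_of_nonneg (hx j)])
    _ = ∑ j, l1 (fun i => M i j) * x j := by
        rw [Finset.sum_comm]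
        simp only [l1, Finset.sum_mul]
    _ ≤ ∑ j, c * x j := Finset.sum_le_sum fun j _ => mul_le_mul_of_nonneg_right (hM j) (hx j)
    _ = c * ∑ j, x j := (Finset.mul_sum ..).symm

end L1

section Kappa

variable {d r : ℕ} (W : Matrix (Fin d) (Fin r) ℝ)

lemma kappa_nonneg : 0 ≤ kappa W :=
  Real.sInf_nonneg (by rintro _ ⟨j, z, -, -, rfl⟩; exact l1_nonneg _)

lemma kappa_le (j : Fin r) {z : Fin r → ℝ} (hz : ∀ k, 0 ≤ z k) (hzj : z j = 0) :
    kappa W ≤ l1 (fun i => W i j - (W *ᵥ z) i) :=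
  csInf_le ⟨0, by rintro _ ⟨j, z, -, -, rfl⟩; exact l1_nonneg _⟩ ⟨j, z, hz, hzj, rfl⟩

lemma kappa_le_l1_col (j : Fin r) : kappa W ≤ l1 (fun i => W i j) := by
  simpa using kappa_le W j (z := 0) (fun _ => le_rfl) rfl

/-- If `y j < 1`, then `w_j - W y = (1 - y j) (w_j - W z)` where `z` is `y` with its `j`-th entry
removed and rescaled by `(1 - y j)⁻¹`. -/
lemma kappa_mul_one_sub_le {y : Fin r → ℝ} (hy : ∀ k, 0 ≤ y k) (j : Fin r) :
    kappa W * (1 - y j) ≤ l1 (fun i => W i j - (W *ᵥ y) i) := by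
  rcases le_or_gt 1 (y j) with h | h
  · exact (mul_nonpos_of_nonneg_of_nonpos (kappa_nonneg W) (by linarith)).trans (l1_nonneg _)
  have hc : 0 < 1 - y j := by linarith
  set z : Fin r → ℝ := (1 - y j)⁻¹ • (y - Pi.single j (y j))
  have hz : ∀ k, 0 ≤ z k := by
    intro k
    rcases eq_or_ne k j with rfl | hk
    · simp [z]
    · simpa [z, hk] using mul_nonneg (inv_nonneg.2 hc.le) (hy k)
  have hWz : ∀ i, W i j - (W *ᵥ y) i = (1 - y j) * (W i j - (W *ᵥ z) i) := by
    intro i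
    have : (1 - y j) * (W *ᵥ z) i = (W *ᵥ y) i - W i j * y j := by
      simp [z, mulVec_smul, mulVec_sub, mulVec_single, mul_comm]
      field_simp
    linear_combination this
  calc kappa W * (1 - y j) ≤ l1 (fun i => W i j - (W *ᵥ z) i) * (1 - y j) :=
        mul_le_mul_of_nonneg_right (kappa_le W j hz (by simp [z])) hc.le
    _ = l1 (fun i => W i j - (W *ᵥ y) i) := by
        rw [mul_comm]
        simp only [l1, hWz, abs_mul, abs_of_pos hc, Finset.mul_sum]

end Kappa

lemma le_betaH {r m : ℕ} (Hb : Matrix (Fin r) (Fin m) ℝ) (k : Fin r) (l : Fin m) :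
    Hb k l ≤ betaH Hb :=
  le_csSup (Set.finite_range _).bddAbove ⟨(k, l), rfl⟩

lemma betaH_nonneg {r m : ℕ} {Hb : Matrix (Fin r) (Fin m) ℝ} (hHb : ∀ k l, 0 ≤ Hb k l) :
    0 ≤ betaH Hb :=
  Real.sSup_nonneg (by rintro _ ⟨p, rfl⟩; exact hHb p.1 p.2)

section Separable

variable {r : ℕ} {ι μ : Type*}

lemma sum_eq_sum_inl_add_sum_inr [Fintype ι] [Fintype μ] (σ : ι ≃ Fin r ⊕ μ) (f : ι → ℝ) :
    ∑ u, f u = ∑ j, f (σ.symm (.inl j)) + ∑ l, f (σ.symm (.inr l)) := by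
  rw [← σ.symm.sum_comp, Fintype.sum_sum_type]

/-- `H = [I_r, H̄] Π` with column-stochastic `H`, the basis columns being those sent to `inl`
by `σ`. -/
structure IsSeparableFactor (σ : ι ≃ Fin r ⊕ μ) (H : Matrix (Fin r) ι ℝ) : Prop where
  nonneg : ∀ k u, 0 ≤ H k u
  sum_col : ∀ u, ∑ k, H k u = 1
  basis_col : ∀ k j, H k (σ.symm (.inl j)) = if k = j then 1 else 0

/-- The paper's ideal solution `X₀ = Πᵀ [H; 0]`. -/
def basisRowMatrix (σ : ι ≃ Fin r ⊕ μ) (H : Matrix (Fin r) ι ℝ) : Matrix ι ι ℝ :=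
  fun u v => Sum.elim (fun j => H j v) (fun _ => 0) (σ u)

@[simp]
lemma basisRowMatrix_inl (σ : ι ≃ Fin r ⊕ μ) (H : Matrix (Fin r) ι ℝ) (j : Fin r) (v : ι) :
    basisRowMatrix σ H (σ.symm (.inl j)) v = H j v := by
  simp [basisRowMatrix]

@[simp]
lemma basisRowMatrix_inr (σ : ι ≃ Fin r ⊕ μ) (H : Matrix (Fin r) ι ℝ) (l : μ) (v : ι) :
    basisRowMatrix σ H (σ.symm (.inr l)) v = 0 := by
  simp [basisRowMatrix]

lemma sum_basisRowMatrix_col [Fintype ι] [Fintype μ] (σ : ι ≃ Fin r ⊕ μ)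
    (H : Matrix (Fin r) ι ℝ) (v : ι) :
    ∑ u, basisRowMatrix σ H u v = ∑ j, H j v := by
  simp [sum_eq_sum_inl_add_sum_inr σ]

namespace IsSeparableFactor

variable {σ : ι ≃ Fin r ⊕ μ} {H : Matrix (Fin r) ι ℝ}

lemma le_one (hH : IsSeparableFactor σ H) (k : Fin r) (u : ι) : H k u ≤ 1 :=
  hH.sum_col u ▸ Finset.single_le_sum (fun k _ => hH.nonneg k u) (Finset.mem_univ k)

lemma mul_basisRowMatrix [Fintype ι] [Fintype μ] (hH : IsSeparableFactor σ H) :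
    H * basisRowMatrix σ H = H := by
  ext k v
  simp [mul_apply, sum_eq_sum_inl_add_sum_inr σ, hH.basis_col]

lemma feas_basisRowMatrix [Fintype ι] [Fintype μ] [DecidableEq ι]
    (hH : IsSeparableFactor σ H) :
    Feas (basisRowMatrix σ H) r := by
  refine ⟨?_, fun u => ?_, fun u v => ?_, fun u v => ?_⟩
  · simp [trace, sum_eq_sum_inl_add_sum_inr σ, hH.basis_col]
  all_goals
    obtain ⟨j | l, rfl⟩ := σ.symm.surjective u
    · simp [hH.basis_col, hH.le_one, hH.nonneg]
    · simp

lemma sum_mulVec [Fintype ι] (hH : IsSeparableFactor σ H) (x : ι → ℝ) :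
    ∑ k, (H *ᵥ x) k = ∑ u, x u := by
  simp only [mulVec, dotProduct, Finset.sum_comm (γ := Fin r), ← Finset.sum_mul, hH.sum_col,
    one_mul]

lemma mulVec_le [Fintype ι] [Fintype μ] (hH : IsSeparableFactor σ H) {β : ℝ} (hβ : 0 ≤ β)
    (hHβ : ∀ k l, H k (σ.symm (.inr l)) ≤ β) {x : ι → ℝ} (hx : ∀ u, 0 ≤ x u) (j : Fin r) :
    (H *ᵥ x) j ≤ x (σ.symm (.inl j)) + β * (∑ u, x u - x (σ.symm (.inl j))) := by
  have hinl : x (σ.symm (.inl j)) ≤ ∑ k, x (σ.symm (.inl k)) :=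
    Finset.single_le_sum (f := fun k => x (σ.symm (.inl k))) (fun k _ => hx _)
      (Finset.mem_univ j)
  have hinr :
      ∑ l, H j (σ.symm (.inr l)) * x (σ.symm (.inr l)) ≤ β * ∑ l, x (σ.symm (.inr l)) := by
    rw [Finset.mul_sum]
    exact Finset.sum_le_sum fun l _ => mul_le_mul_of_nonneg_right (hHβ j l) (hx _)
  rw [mulVec, dotProduct, sum_eq_sum_inl_add_sum_inr σ, sum_eq_sum_inl_add_sum_inr σ x]
  simp only [hH.basis_col, ite_mul, one_mul, zero_mul, Finset.sum_ite_eq, Finset.mem_univ,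
    if_true]
  nlinarith

end IsSeparableFactor

end Separable

lemma nat_div_succ_lt_of_hottopixx_bounds {r : ℕ} (hr : 1 ≤ r) {κ β ε δ s p y : ℝ}
    (hκ : 0 < κ) (hκ1 : κ ≤ 1) (hβ0 : 0 ≤ β) (hβ1 : β < 1) (hε : 0 ≤ ε)
    (hεb : ε ≤ κ * (1 - β) / (9 * (r + 1))) (hδ0 : 0 ≤ δ) (hδ : δ ≤ 2 * ε + ε + ε * s)
    (hs : s ≤ 1 + δ) (hκy : κ * (1 - y) ≤ δ) (hy : y ≤ p + β * (s - p)) :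
    (r : ℝ) / (r + 1) < p := by
  have hr' : (1 : ℝ) ≤ r := by exact_mod_cast hr
  have hc : 0 < κ * (1 - β) := mul_pos hκ (by linarith)
  have hεb' : 9 * (r + 1) * ε ≤ κ * (1 - β) := by
    rwa [le_div_iff₀ (by positivity), mul_comm] at hεb
  -- `κ (1 - β) ≤ 1` and `r ≥ 1` give `18 ε ≤ 1`, hence `δ ≤ 4ε/(1 - ε) ≤ 72ε/17` and finally
  -- `1 - p ≤ 2δ / (κ (1 - β)) ≤ 16 / (17 (r + 1))`.
  have hε18 : 18 * ε ≤ 1 := by nlinarith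
  have hδε : 17 * δ ≤ 72 * ε := by nlinarith [mul_le_mul_of_nonneg_left hs hε]
  have hκβ : κ * β * δ ≤ δ := by
    nlinarith [mul_nonneg hκ.le hβ0, mul_le_mul hκ1 hβ1.le hβ0 zero_le_one]
  have hkey : κ * (1 - β) * (1 - p) ≤ 2 * δ := by
    nlinarith [mul_le_mul_of_nonneg_left hs hβ0, mul_le_mul_of_nonneg_left hy hκ.le]
  have hp : 17 * (r + 1) * (1 - p) ≤ 16 := by
    by_contra! h
    nlinarith [mul_lt_mul_of_pos_right h hc]
  rw [div_lt_iff₀ (by positivity)]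
  nlinarith

section Hottopixx

variable {d r : ℕ} {ι μ : Type*} [Fintype ι] {σ : ι ≃ Fin r ⊕ μ}
  {W : Matrix (Fin d) (Fin r) ℝ} {H : Matrix (Fin r) ι ℝ} {N : Matrix (Fin d) ι ℝ} {ε : ℝ}

/-- Since `H X₀ = H`, the residual `A - A X₀` is `N - N X₀`. -/
lemma ml1_sub_mul_basisRowMatrix_le [Fintype μ] (hH : IsSeparableFactor σ H) (hN : ml1 N ≤ ε)
    (hε : 0 ≤ ε) : ml1 (W * H + N - (W * H + N) * basisRowMatrix σ H) ≤ 2 * ε := by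
  have hres : W * H + N - (W * H + N) * basisRowMatrix σ H = N - N * basisRowMatrix σ H := by
    rw [Matrix.add_mul, Matrix.mul_assoc, hH.mul_basisRowMatrix]
    abel
  rw [hres]
  refine ml1_le_of_l1_col_le (by linarith) fun v => ?_
  have hx : ∀ u, 0 ≤ basisRowMatrix σ H u v := fun u => by
    obtain ⟨j | l, rfl⟩ := σ.symm.surjective u
    · simpa using hH.nonneg j v
    · simp
  calc l1 ((fun i => N i v) - N *ᵥ fun u => basisRowMatrix σ H u v)
      ≤ l1 (fun i => N i v) + l1 (N *ᵥ fun u => basisRowMatrix σ H u v) := l1_sub_le _ _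
    _ ≤ ε + ε * ∑ u, basisRowMatrix σ H u v :=
        add_le_add ((l1_col_le_ml1 N v).trans hN)
          (l1_mulVec_le (fun u => (l1_col_le_ml1 N u).trans hN) hx)
    _ = 2 * ε := by rw [sum_basisRowMatrix_col, hH.sum_col]; ring

/-- Column `σ⁻¹ (inl j)` of `A = W H + N` is `w_j + n_j`, so `w_j - W H x` is the residual
column minus `n_j` plus `N x`. -/
lemma l1_sub_mulVec_mulVec_le (hH : IsSeparableFactor σ H) (hN : ml1 N ≤ ε)
    {X : Matrix ι ι ℝ} (hX : ∀ u v, 0 ≤ X u v) (j : Fin r) :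
    l1 (fun i => W i j - (W *ᵥ H *ᵥ fun u => X u (σ.symm (.inl j))) i)
      ≤ ml1 (W * H + N - (W * H + N) * X) + ε + ε * ∑ u, X u (σ.symm (.inl j)) := by
  set i₀ := σ.symm (.inl j)
  set x : ι → ℝ := fun u => X u i₀
  have hcol : (fun i => W i j - (W *ᵥ H *ᵥ x) i)
      = (fun i => (W * H + N - (W * H + N) * X) i i₀) - (fun i => N i i₀) + N *ᵥ x := by
    ext i
    have hWH : (W * H) i i₀ = W i j := by simp [i₀, mul_apply, hH.basis_col]
    have hAX : ((W * H + N) * X) i i₀ = (W *ᵥ H *ᵥ x) i + (N *ᵥ x) i := by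
      rw [mulVec_mulVec, ← Pi.add_apply, ← add_mulVec]
      rfl
    simp only [Pi.add_apply, Pi.sub_apply, Matrix.sub_apply, Matrix.add_apply, hWH, hAX]
    ring
  rw [hcol]
  refine (l1_add_le _ _).trans (add_le_add ((l1_sub_le _ _).trans ?_) ?_)
  · exact add_le_add (l1_col_le_ml1 _ i₀) ((l1_col_le_ml1 N i₀).trans hN)
  · exact l1_mulVec_le (fun u => (l1_col_le_ml1 N u).trans hN) fun u => hX u i₀

lemma lt_diag_of_ml1_residual_le [Fintype μ] (hH : IsSeparableFactor σ H) {β : ℝ}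
    (hβ0 : 0 ≤ β) (hβ1 : β < 1) (hHβ : ∀ k l, H k (σ.symm (.inr l)) ≤ β)
    (hW : ∀ i k, 0 ≤ W i k) (hWcol : ∀ k, l1 (fun i => W i k) = 1) (hN : ml1 N ≤ ε)
    (hε : 0 ≤ ε) {X : Matrix ι ι ℝ} (hX : ∀ u v, 0 ≤ X u v)
    (hres : ml1 (W * H + N - (W * H + N) * X) ≤ 2 * ε) (hκ : 0 < kappa W)
    (hεb : ε ≤ kappa W * (1 - β) / (9 * (r + 1))) (j : Fin r) :
    (r : ℝ) / (r + 1) < X (σ.symm (.inl j)) (σ.symm (.inl j)) := by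
  set x : ι → ℝ := fun u => X u (σ.symm (.inl j))
  have hx : ∀ u, 0 ≤ x u := fun u => hX u _
  have hy : ∀ k, 0 ≤ (H *ᵥ x) k := fun k =>
    Finset.sum_nonneg fun u _ => mul_nonneg (hH.nonneg k u) (hx u)
  have hWsum : ∀ k, ∑ i, W i k = 1 := fun k =>
    (l1_eq_sum_of_nonneg (hW · k)).symm.trans (hWcol k)
  have hs : ∑ u, x u ≤ 1 + l1 (fun i => W i j - (W *ᵥ H *ᵥ x) i) := by
    have hsum : ∑ i, (W i j - (W *ᵥ H *ᵥ x) i) = 1 - ∑ u, x u := by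
      rw [Finset.sum_sub_distrib, hWsum, ← hH.sum_mulVec x]
      simp only [mulVec, dotProduct, Finset.sum_comm (γ := Fin d), ← Finset.sum_mul, hWsum,
        one_mul]
    have habs : |1 - ∑ u, x u| ≤ l1 (fun i => W i j - (W *ᵥ H *ᵥ x) i) :=
      hsum ▸ Finset.abs_sum_le_sum_abs _ _
    linarith [neg_abs_le (1 - ∑ u, x u)]
  exact nat_div_succ_lt_of_hottopixx_bounds (Fin.pos j) hκ
    ((kappa_le_l1_col W j).trans_eq (hWcol j)) hβ0 hβ1 hε hεb (l1_nonneg _)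
    ((l1_sub_mulVec_mulVec_le hH hN hX j).trans (by gcongr)) hs
    (kappa_mul_one_sub_le W hy j) (hH.mulVec_le hβ0 hHβ hx j)

end Hottopixx

lemma Feas.diag_le_of_lt_diag {r : ℕ} {ι μ : Type*} [Fintype ι] [DecidableEq ι] [Fintype μ]
    {σ : ι ≃ Fin r ⊕ μ} {X : Matrix ι ι ℝ} (hX : Feas X r)
    (hbasis : ∀ j, (r : ℝ) / (r + 1) < X (σ.symm (.inl j)) (σ.symm (.inl j)))
    {u : ι} (hu : ∀ j, u ≠ σ.symm (.inl j)) : X u u ≤ (r : ℝ) / (r + 1) := by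
  obtain ⟨l, rfl⟩ : ∃ l, σ.symm (.inr l) = u := by
    obtain ⟨j | l, rfl⟩ := σ.symm.surjective u
    · exact absurd rfl (hu j)
    · exact ⟨l, rfl⟩
  have htrace := hX.1
  rw [trace, sum_eq_sum_inl_add_sum_inr σ] at htrace
  have hinl : r * ((r : ℝ) / (r + 1)) ≤ ∑ j, X (σ.symm (.inl j)) (σ.symm (.inl j)) := by
    simpa using Finset.sum_le_sum fun j (_ : j ∈ Finset.univ) => (hbasis j).le
  have hinr :
      X (σ.symm (.inr l)) (σ.symm (.inr l)) ≤ ∑ l, X (σ.symm (.inr l)) (σ.symm (.inr l)) :=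
    Finset.single_le_sum (f := fun l => X (σ.symm (.inr l)) (σ.symm (.inr l)))
      (fun l _ => hX.2.2.1 _ _) (Finset.mem_univ l)
  have hsplit : (r : ℝ) - r * (r / (r + 1)) = r / (r + 1) := by field_simp; ring
  simp only [diag] at htrace
  linarith

lemma isSeparableFactor_fromCols {r : ℕ} {ι μ : Type*} {σ : ι ≃ Fin r ⊕ μ}
    {Hbar : Matrix (Fin r) μ ℝ} (hHbar : ∀ k l, 0 ≤ Hbar k l)
    (hcol : ∀ u, l1 (fun k => fromCols (1 : Matrix (Fin r) (Fin r) ℝ) Hbar k (σ u)) = 1) :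
    IsSeparableFactor σ (fun k u => fromCols (1 : Matrix (Fin r) (Fin r) ℝ) Hbar k (σ u)) := by
  have hnonneg : ∀ k u, 0 ≤ fromCols (1 : Matrix (Fin r) (Fin r) ℝ) Hbar k (σ u) := by
    intro k u
    rcases σ u with j | l
    · simp [one_apply, apply_ite]
    · exact hHbar k l
  exact ⟨hnonneg, fun u => (l1_eq_sum_of_nonneg (hnonneg · u)).symm.trans (hcol u),
    fun k j => by simp [one_apply]⟩

theorem hottopixx_identifies_basis_general
    {d r m : ℕ} (W : Matrix (Fin d) (Fin r) ℝ) (Hbar : Matrix (Fin r) (Fin m) ℝ)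
    (σ : Equiv.Perm (Fin r ⊕ Fin m))
    (N A V : Matrix (Fin d) (Fin r ⊕ Fin m) ℝ)
    (H : Matrix (Fin r) (Fin r ⊕ Fin m) ℝ) (ε : ℝ)
    (hW : ∀ i j, 0 ≤ W i j) (hHbar : ∀ i j, 0 ≤ Hbar i j)
    (hH : H = fun j u => Matrix.fromCols (1 : Matrix (Fin r) (Fin r) ℝ) Hbar j (σ u))
    (hV : V = W * H) (hA : A = V + N)
    (hWcol : ∀ j, l1 (fun i => W i j) = 1)
    (hHcol : ∀ u, l1 (fun j => H j u) = 1)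
    (hε0 : 0 ≤ ε) (hN : ml1 N ≤ ε)
    (Xopt : Matrix (Fin r ⊕ Fin m) (Fin r ⊕ Fin m) ℝ)
    (hfeas : Feas Xopt r)
    (hopt : ∀ X : Matrix (Fin r ⊕ Fin m) (Fin r ⊕ Fin m) ℝ,
      Feas X r → ml1 (A - A * Xopt) ≤ ml1 (A - A * X))
    (hκ : 0 < kappa W) (hβ : betaH Hbar < 1)
    (hεb : ε ≤ kappa W * (1 - betaH Hbar) / (9 * (r + 1))) :
    (∀ j : Fin r,
        (r : ℝ) / (r + 1) < Xopt (σ.symm (Sum.inl j)) (σ.symm (Sum.inl j))) ∧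
    (∀ u : Fin r ⊕ Fin m, (∀ j : Fin r, u ≠ σ.symm (Sum.inl j)) →
        Xopt u u ≤ (r : ℝ) / (r + 1)) := by
  subst hA hV hH
  have hsep := isSeparableFactor_fromCols hHbar hHcol
  have hres :=
    (hopt _ hsep.feas_basisRowMatrix).trans (ml1_sub_mul_basisRowMatrix_le hsep hN hε0)
  have hbasis := lt_diag_of_ml1_residual_le hsep (betaH_nonneg hHbar) hβ
    (fun k l => by simpa using le_betaH Hbar k l) hW hWcol hN hε0 hfeas.2.2.1 hres hκ hεb
  exact ⟨hbasis, fun u hu => hfeas.diag_le_of_lt_diag hbasis hu⟩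

/-- If ε ≤ κ(1−β)/(9(r+1)) (with κ > 0, β < 1), the diagonal of X_opt exceeds
    r/(r+1) exactly on the basis indices; hence the r largest entries of
    p = diag(X_opt) are the basis indices. -/
theorem hottopixx_identifies_basis
    {d r m : ℕ} (W : Matrix (Fin d) (Fin r) ℝ) (Hbar : Matrix (Fin r) (Fin m) ℝ)
    (σ : Equiv.Perm (Fin r ⊕ Fin m))
    (N A V : Matrix (Fin d) (Fin r ⊕ Fin m) ℝ)
    (H : Matrix (Fin r) (Fin r ⊕ Fin m) ℝ) (ε : ℝ)
    (hW : ∀ i j, 0 ≤ W i j) (hHbar : ∀ i j, 0 ≤ Hbar i j)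
    (hH : H = fun j u => Matrix.fromCols (1 : Matrix (Fin r) (Fin r) ℝ) Hbar j (σ u))
    (hV : V = W * H) (hA : A = V + N)
    (hVcol : ∀ u, l1 (fun i => V i u) = 1)
    (hWcol : ∀ j, l1 (fun i => W i j) = 1)
    (hHcol : ∀ u, l1 (fun j => H j u) = 1)
    (hε0 : 0 ≤ ε) (hε1 : ε < 1) (hN : ml1 N ≤ ε)
    (Xopt : Matrix (Fin r ⊕ Fin m) (Fin r ⊕ Fin m) ℝ)
    (hfeas : Feas Xopt r)
    (hopt : ∀ X : Matrix (Fin r ⊕ Fin m) (Fin r ⊕ Fin m) ℝ,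
      Feas X r → ml1 (A - A * Xopt) ≤ ml1 (A - A * X))
    (hκ : 0 < kappa W) (hβ : betaH Hbar < 1)
    (hεb : ε ≤ kappa W * (1 - betaH Hbar) / (9 * (r + 1))) :
    (∀ j : Fin r,
        (r : ℝ) / (r + 1) < Xopt (σ.symm (Sum.inl j)) (σ.symm (Sum.inl j))) ∧
    (∀ u : Fin r ⊕ Fin m, (∀ j : Fin r, u ≠ σ.symm (Sum.inl j)) →
        Xopt u u ≤ (r : ℝ) / (r + 1)) :=
  hottopixx_identifies_basis_general W Hbar σ N A V H ε hW hHbar hH hV hA hWcol hHcol hε0 hN Xopt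
    hfeas hopt hκ hβ hεb
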